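/- Let n ≥ 1 and r ∈ ℕ. Define on ℝ[x₁, …, xₙ] the barycentric coordinate polynomials λ₀ = 1 − (x₁ + … + xₙ) and λ_j = x_j for 1 ≤ j ≤ n, the operators D_{ij} = ∂/∂x_j − ∂/∂x_i for 0 ≤ i < j ≤ n (with ∂/∂x₀ = 0), and the Braess–Schwab operator 𝓛u = −Σ_{0 ≤ i < j ≤ n} D_{ij}( λ_i λ_j D_{ij} u ). Let P_r ⊆ ℝ[x₁, …, xₙ] be the subspace of polynomials of total degree ≤ r, and for 0 ≤ p ≤ r let Φ_p = { u ∈ P_r : 𝓛u = p(p+n)·u } be the eigenspace for the eigenvalue p(p+n). Then the eigenvalues p(p+n), p = 0, …, r, are pairwise distinct, the subspaces Φ₀, …, Φ_r are linearly independent, and P_r is their internal direct sum: P_r = Φ₀ ⊕ Φ₁ ⊕ … ⊕ Φ_r. -/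

import Mathlib

open MvPolynomial

/-- Formal partial derivatives `∂/∂x_i` on `ℝ[x₁,…,xₙ]`, indexed by
`i ∈ {0,…,n}` with the convention `∂/∂x₀ = 0`. -/
noncomputable def pd (n : ℕ) : Fin (n + 1) → (MvPolynomial (Fin n) ℝ →ₗ[ℝ] MvPolynomial (Fin n) ℝ) :=
  Fin.cases 0 (fun j => (pderiv j).toLinearMap)

/-- The edge operator `D_{ij} = ∂/∂x_j − ∂/∂x_i` (with `∂/∂x₀ = 0`). -/
noncomputable def Dop (n : ℕ) (i j : Fin (n + 1)) :
    MvPolynomial (Fin n) ℝ →ₗ[ℝ] MvPolynomial (Fin n) ℝ :=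
  pd n j - pd n i

/-- The barycentric coordinate polynomials of the reference `n`-simplex:
`λ₀ = 1 − (x₁ + … + xₙ)` and `λ_j = x_j` for `1 ≤ j ≤ n`. -/
noncomputable def lam (n : ℕ) : Fin (n + 1) → MvPolynomial (Fin n) ℝ :=
  Fin.cases (1 - ∑ j : Fin n, X j) (fun j => X j)

/-- The Braess–Schwab operator
`𝓛 u = −Σ_{0 ≤ i < j ≤ n} D_{ij}( λ_i λ_j D_{ij} u )`. -/
noncomputable def braessSchwab (n : ℕ) :
    MvPolynomial (Fin n) ℝ →ₗ[ℝ] MvPolynomial (Fin n) ℝ :=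
  - ∑ i : Fin (n + 1), ∑ j : Fin (n + 1),
      if i < j then
        (Dop n i j) ∘ₗ (LinearMap.mulLeft ℝ (lam n i * lam n j)) ∘ₗ (Dop n i j)
      else 0

/-!
Write `E = Σᵢ xᵢ ∂ᵢ` for the Euler operator. Expanding each edge term and using `Σᵢ λᵢ = 1` and
`Σᵢ λᵢ ∂ᵢ = E` collapses the Braess–Schwab operator to `𝓛 = E² + nE − Σᵢ ∂ᵢ xᵢ ∂ᵢ`. On a
monomial of degree `d` the operator `E² + nE` is multiplication by `d(d+n)`, and the last term
lowers the degree, so `𝓛 − (r+1)(r+1+n)` maps `P_{r+1}` into `P_r`. Because `p ↦ p(p+n)` is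
strictly increasing, an induction on `r` splits every element of `P_r` into eigenvectors for the
eigenvalues `p(p+n)`, `p ≤ r`, and eigenvectors for distinct eigenvalues are independent.
-/

namespace MvPolynomial

variable {σ R : Type*} [CommSemiring R]

theorem totalDegree_apply_le_of_forall_monomial
    (T : MvPolynomial σ R →ₗ[R] MvPolynomial σ R) {k m : ℕ}
    (hT : ∀ s a, s.degree ≤ k → (T (monomial s a)).totalDegree ≤ m)
    {u : MvPolynomial σ R} (hu : u.totalDegree ≤ k) : (T u).totalDegree ≤ m := by
  rw [u.as_sum, map_sum]
  exact totalDegree_finsetSum_le fun s hs => hT s _ ((le_totalDegree hs).trans hu)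

theorem totalDegree_pderiv_le {k : ℕ} (i : σ) {u : MvPolynomial σ R}
    (hu : u.totalDegree ≤ k + 1) : (pderiv i u).totalDegree ≤ k :=
  totalDegree_apply_le_of_forall_monomial (pderiv i).toLinearMap
    (fun s a hs => ((isHomogeneous_monomial a rfl).pderiv).totalDegree_le.trans (by omega)) hu

variable (σ R) [Fintype σ]

noncomputable def eulerOp : Module.End R (MvPolynomial σ R) :=
  ∑ i, LinearMap.mulLeft R (X i) ∘ₗ (pderiv i).toLinearMap

variable {σ R}

theorem eulerOp_apply (u : MvPolynomial σ R) : eulerOp σ R u = ∑ i, X i * pderiv i u := by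
  simp [eulerOp]

theorem eulerOp_monomial (s : σ →₀ ℕ) (a : R) :
    eulerOp σ R (monomial s a) = s.degree • monomial s a := by
  rw [eulerOp_apply, (isHomogeneous_monomial a rfl).sum_X_mul_pderiv]

theorem sum_pderiv_X_mul (v : MvPolynomial σ R) :
    ∑ i, pderiv i (X i * v) = Fintype.card σ • v + eulerOp σ R v := by
  simp only [pderiv_mul, pderiv_X_self, one_mul, Finset.sum_add_distrib, Finset.sum_const,
    Finset.card_univ, eulerOp_apply]

end MvPolynomial

theorem Finset.sum_sum_ite_lt_add_swap {ι M : Type*} [Fintype ι] [LinearOrder ι]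
    [AddCommMonoid M] (Q : ι → ι → M) (hQ : ∀ i, Q i i = 0) :
    ∑ i, ∑ j, (if i < j then Q i j + Q j i else 0) = ∑ i, ∑ j, Q i j := by
  have hsplit : ∀ i j, Q i j = (if i < j then Q i j else 0) + (if j < i then Q i j else 0) := by
    intro i j
    rcases lt_trichotomy i j with h | rfl | h
    · simp [h, h.not_gt]
    · simp [hQ]
    · simp [h, h.not_gt]
  calc ∑ i, ∑ j, (if i < j then Q i j + Q j i else 0)
      = ∑ i, ∑ j, ((if i < j then Q i j else 0) + (if j < i then Q i j else 0)) := by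
        simp_rw [ite_add_zero, Finset.sum_add_distrib]
        rw [Finset.sum_comm (f := fun i j => if j < i then Q i j else 0)]
    _ = ∑ i, ∑ j, Q i j := by simp_rw [← hsplit]

theorem Module.End.exists_eq_sum_eigenvectors {K M : Type*} [Field K] [AddCommGroup M]
    [Module K M] (f : Module.End K M) (F : ℕ → Submodule K M) (hF : Monotone F) (μ : ℕ → K)
    (hμ : Function.Injective μ) (hbase : ∀ u ∈ F 0, f u = μ 0 • u)
    (hstep : ∀ k, ∀ u ∈ F (k + 1), f u - μ (k + 1) • u ∈ F k) (r : ℕ) :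
    ∀ u ∈ F r, ∃ c : Fin (r + 1) → M, (∀ p, c p ∈ F r ∧ f (c p) = μ p • c p) ∧ u = ∑ p, c p := by
  induction r with
  | zero =>
    exact fun u hu => ⟨fun _ => u, fun p => ⟨hu, by rw [Fin.val_eq_zero p]; exact hbase u hu⟩,
      by simp⟩
  | succ r ih =>
    intro u hu
    obtain ⟨d, hd, hsum⟩ := ih _ (hstep r u hu)
    have hne : ∀ q : Fin (r + 1), μ q - μ (r + 1) ≠ 0 := fun q =>
      sub_ne_zero.2 (hμ.ne (by omega))
    -- `f - μ (r + 1)` acts on the `μ q`-eigenspace as the nonzero scalar `μ q - μ (r + 1)`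
    set e : Fin (r + 1) → M := fun q => (μ q - μ (r + 1))⁻¹ • d q
    have he : ∀ q, f (e q) = μ q • e q := fun q => by rw [map_smul, (hd q).2, smul_comm]
    have hde : ∀ q, f (e q) - μ (r + 1) • e q = d q := fun q => by
      rw [he, ← sub_smul, smul_smul, mul_inv_cancel₀ (hne q), one_smul]
    have heF : ∀ q, e q ∈ F (r + 1) := fun q => hF r.le_succ (Submodule.smul_mem _ _ (hd q).1)
    refine ⟨Fin.snoc e (u - ∑ q, e q), fun p => ?_, by simp [Fin.sum_univ_castSucc]⟩
    induction p using Fin.lastCases with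
    | last =>
      simp only [Fin.snoc_last, Fin.val_last]
      refine ⟨sub_mem hu (sum_mem fun q _ => heF q), ?_⟩
      rw [← sub_eq_zero]
      calc f (u - ∑ q, e q) - μ (r + 1) • (u - ∑ q, e q)
          = (f u - μ (r + 1) • u) - ∑ q, (f (e q) - μ (r + 1) • e q) := by
            simp only [map_sub, map_sum, smul_sub, Finset.smul_sum, Finset.sum_sub_distrib]
            abel
        _ = 0 := by simp_rw [hde, hsum, sub_self]
    | cast q =>
      simp only [Fin.snoc_castSucc, Fin.val_castSucc]
      exact ⟨heF q, he q⟩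

theorem strictMono_mul_add (n : ℕ) : StrictMono fun p : ℕ => p * (p + n) :=
  fun _ _ h => Nat.mul_lt_mul'' h (by omega)

section Simplex

variable {n : ℕ}

@[simp]
theorem pd_zero_apply (v : MvPolynomial (Fin n) ℝ) : pd n 0 v = 0 := rfl

@[simp]
theorem pd_succ_apply (j : Fin n) (v : MvPolynomial (Fin n) ℝ) :
    pd n j.succ v = pderiv j v :=
  rfl

theorem sum_lam : ∑ i, lam n i = 1 := by
  simp [Fin.sum_univ_succ, lam]

theorem sum_lam_mul_pd (v : MvPolynomial (Fin n) ℝ) :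
    ∑ i, lam n i * pd n i v = eulerOp (Fin n) ℝ v := by
  simp [Fin.sum_univ_succ, lam, eulerOp_apply]

theorem sum_pd_lam_mul (g : Fin (n + 1) → MvPolynomial (Fin n) ℝ) :
    ∑ i, pd n i (lam n i * g i) = ∑ j, pderiv j (X j * g j.succ) := by
  simp [Fin.sum_univ_succ, lam]

theorem braessSchwab_apply (u : MvPolynomial (Fin n) ℝ) :
    braessSchwab n u = eulerOp (Fin n) ℝ (eulerOp (Fin n) ℝ u) + n • eulerOp (Fin n) ℝ u
      - ∑ j, pderiv j (X j * pderiv j u) := by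
  set Q : Fin (n + 1) → Fin (n + 1) → MvPolynomial (Fin n) ℝ :=
    fun i j => pd n j (lam n i * lam n j * (pd n j u - pd n i u))
  have hterm : ∀ i j, Dop n i j (lam n i * lam n j * Dop n i j u) = Q i j + Q j i := by
    intro i j
    simp only [Q, Dop, LinearMap.sub_apply]
    rw [mul_comm (lam n j), ← neg_sub (pd n j u), mul_neg, map_neg]
    abel
  have hrow : ∀ j, ∑ i, lam n i * lam n j * (pd n j u - pd n i u)
      = lam n j * (pd n j u - eulerOp (Fin n) ℝ u) := by
    intro j
    simp_rw [mul_sub, Finset.sum_sub_distrib, ← Finset.sum_mul, sum_lam, ← sum_lam_mul_pd,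
      Finset.mul_sum]
    congr 1
    · ring
    · exact Finset.sum_congr rfl fun i _ => by ring
  calc braessSchwab n u = -∑ i, ∑ j, (if i < j then Q i j + Q j i else 0) := by
        simp only [braessSchwab, LinearMap.neg_apply, LinearMap.sum_apply,
          apply_ite (fun f : Module.End ℝ _ => f u), LinearMap.comp_apply,
          LinearMap.mulLeft_apply, LinearMap.zero_apply, hterm]
    _ = -∑ j, pd n j (lam n j * (pd n j u - eulerOp (Fin n) ℝ u)) := by
        rw [Finset.sum_sum_ite_lt_add_swap Q (by simp [Q]), Finset.sum_comm]
        simp_rw [Q, ← map_sum, hrow]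
    _ = _ := by
        rw [sum_pd_lam_mul]
        simp only [pd_succ_apply, mul_sub, map_sub, Finset.sum_sub_distrib, sum_pderiv_X_mul,
          Fintype.card_fin]
        abel

theorem braessSchwab_of_totalDegree_eq_zero {u : MvPolynomial (Fin n) ℝ}
    (hu : u.totalDegree = 0) : braessSchwab n u = 0 := by
  rw [totalDegree_eq_zero_iff_eq_C.1 hu]
  simp [braessSchwab_apply, eulerOp_apply]

theorem totalDegree_braessSchwab_sub_smul_le {r : ℕ} {u : MvPolynomial (Fin n) ℝ}
    (hu : u.totalDegree ≤ r + 1) :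
    (braessSchwab n u - (((r + 1) * (r + 1 + n) : ℕ) : ℝ) • u).totalDegree ≤ r := by
  set μ : ℝ := (((r + 1) * (r + 1 + n) : ℕ) : ℝ)
  set E := eulerOp (Fin n) ℝ
  set T : Module.End ℝ (MvPolynomial (Fin n) ℝ) := E ∘ₗ E + n • E - μ • LinearMap.id
  have hE : (E (E u) + n • E u - μ • u).totalDegree ≤ r := by
    refine totalDegree_apply_le_of_forall_monomial T (fun s a hs => ?_) hu
    have hmon : T (monomial s a)
        = (((s.degree * (s.degree + n) : ℕ) : ℝ) - μ) • monomial s a := by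
      simp only [T, LinearMap.sub_apply, LinearMap.add_apply, LinearMap.comp_apply,
        LinearMap.smul_apply, LinearMap.id_apply, E, eulerOp_monomial, map_nsmul]
      push_cast
      module
    rw [hmon]
    rcases hs.lt_or_eq with hlt | heq
    · exact (totalDegree_smul_le _ _).trans
        ((isHomogeneous_monomial a rfl).totalDegree_le.trans (Nat.le_of_lt_succ hlt))
    · simp [μ, heq]
  have hR : (∑ j, pderiv j (X j * pderiv j u)).totalDegree ≤ r := by
    refine totalDegree_finsetSum_le fun j _ => totalDegree_pderiv_le j ?_
    refine (totalDegree_mul _ _).trans ?_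
    rw [totalDegree_X]
    have := totalDegree_pderiv_le j hu
    omega
  rw [braessSchwab_apply, sub_right_comm]
  exact (totalDegree_sub _ _).trans (max_le hE hR)

theorem braessSchwab_exists_eq_sum_eigenvectors (r : ℕ) {u : MvPolynomial (Fin n) ℝ}
    (hu : u.totalDegree ≤ r) :
    ∃ c : Fin (r + 1) → MvPolynomial (Fin n) ℝ,
      (∀ p, (c p).totalDegree ≤ r ∧
        braessSchwab n (c p) = (((p : ℕ) * ((p : ℕ) + n) : ℕ) : ℝ) • c p) ∧ u = ∑ p, c p := by
  simp only [← mem_restrictTotalDegree] at hu ⊢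
  refine Module.End.exists_eq_sum_eigenvectors (braessSchwab n)
    (fun k => restrictTotalDegree (Fin n) ℝ k) (fun k l hkl v => ?_) _
    (Nat.cast_injective.comp (strictMono_mul_add n).injective) (fun v hv => ?_)
    (fun k v hv => ?_) r u hu <;> simp only [mem_restrictTotalDegree] at *
  · exact fun hv => hv.trans hkl
  · simp [braessSchwab_of_totalDegree_eq_zero (Nat.le_zero.1 hv)]
  · exact totalDegree_braessSchwab_sub_smul_le hv

end Simplex

theorem braessSchwab_spectral_decomposition_general
    (n : ℕ) (r : ℕ) :
    (∀ p q : Fin (r + 1), p ≠ q →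
      ((p : ℕ) * ((p : ℕ) + n) : ℕ) ≠ ((q : ℕ) * ((q : ℕ) + n) : ℕ)) ∧
    (∀ c : Fin (r + 1) → MvPolynomial (Fin n) ℝ,
      (∀ p, (c p).totalDegree ≤ r ∧
        braessSchwab n (c p) = (((p : ℕ) * ((p : ℕ) + n) : ℕ) : ℝ) • c p) →
      ∑ p, c p = 0 → ∀ p, c p = 0) ∧
    (∀ u : MvPolynomial (Fin n) ℝ, u.totalDegree ≤ r →
      ∃ c : Fin (r + 1) → MvPolynomial (Fin n) ℝ,
        (∀ p, (c p).totalDegree ≤ r ∧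
          braessSchwab n (c p) = (((p : ℕ) * ((p : ℕ) + n) : ℕ) : ℝ) • c p) ∧
        u = ∑ p, c p) := by
  have hμ : Function.Injective fun p : Fin (r + 1) => (((p : ℕ) * ((p : ℕ) + n) : ℕ) : ℝ) :=
    Nat.cast_injective.comp ((strictMono_mul_add n).injective.comp Fin.val_injective)
  refine ⟨fun p q hpq => (strictMono_mul_add n).injective.ne (Fin.val_injective.ne hpq),
    fun c hc hsum p => ?_, fun u hu => braessSchwab_exists_eq_sum_eigenvectors r hu⟩
  exact (iSupIndep_iff_finsetSum_eq_zero_imp_eq_zero _).1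
    ((Module.End.eigenspaces_iSupIndep (braessSchwab n)).comp hμ) Finset.univ c
    (fun p _ => Module.End.mem_eigenspace_iff.2 (hc p).2) hsum p (Finset.mem_univ p)

/-- Spectral decomposition of the polynomials of total degree at most `r` under
the Braess–Schwab operator: the eigenvalues `p(p+n)`, `p = 0,…,r`, are pairwise
distinct, the eigenspaces `Φ_p = {u ∈ P_r : 𝓛u = p(p+n)u}` are linearly
independent (a vanishing sum of eigenvectors has all summands zero), and every
polynomial of total degree at most `r` decomposes as a sum of elements of the
`Φ_p`; hence `P_r = Φ₀ ⊕ … ⊕ Φ_r` internally. -/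
theorem braessSchwab_spectral_decomposition
    (n : ℕ) (hn : 1 ≤ n) (r : ℕ) :
    (∀ p q : Fin (r + 1), p ≠ q →
      ((p : ℕ) * ((p : ℕ) + n) : ℕ) ≠ ((q : ℕ) * ((q : ℕ) + n) : ℕ)) ∧
    (∀ c : Fin (r + 1) → MvPolynomial (Fin n) ℝ,
      (∀ p, (c p).totalDegree ≤ r ∧
        braessSchwab n (c p) = (((p : ℕ) * ((p : ℕ) + n) : ℕ) : ℝ) • c p) →
      ∑ p, c p = 0 → ∀ p, c p = 0) ∧
    (∀ u : MvPolynomial (Fin n) ℝ, u.totalDegree ≤ r →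
      ∃ c : Fin (r + 1) → MvPolynomial (Fin n) ℝ,
        (∀ p, (c p).totalDegree ≤ r ∧
          braessSchwab n (c p) = (((p : ℕ) * ((p : ℕ) + n) : ℕ) : ℝ) • c p) ∧
        u = ∑ p, c p) :=
  braessSchwab_spectral_decomposition_general n r
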